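/- Let (f, g) be a scalar admissible system with potential function U, and suppose g′(x) > 0 for all x ∈ (0,1). Let ε ∈ [0,1]. If ∂U/∂x (x; ε) > 0 for all x ∈ (0,1), then f(g(x); ε) < x for all x ∈ (0,1); consequently, for any initial value x^{(0)} ∈ [0,1), the sequence x^{(i)} = f(g(x^{(i−1)}); ε) is nonincreasing and converges to 0. -/

import Mathlib

open Set MeasureTheory intervalIntegral Filter Topology

/-- A scalar admissible system `(f, g)`: `f : [0,1] × [0,1] → [0,1]` (written `f x ε`),
`g : [0,1] → [0,1]`, with `f` strictly increasing in each argument on `(0,1]`,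
`g` strictly increasing on `(0,1]`, `f 0 ε = f x 0 = g 0 = 0`, and `f`, `g`
twice continuously differentiable on their domains. -/
structure ScalarAdmissible (f : ℝ → ℝ → ℝ) (g : ℝ → ℝ) : Prop where
  f_mem : ∀ x ∈ Icc (0:ℝ) 1, ∀ ε ∈ Icc (0:ℝ) 1, f x ε ∈ Icc (0:ℝ) 1
  g_mem : ∀ x ∈ Icc (0:ℝ) 1, g x ∈ Icc (0:ℝ) 1
  f_strictMono_x : ∀ ε ∈ Ioc (0:ℝ) 1, StrictMonoOn (fun x => f x ε) (Ioc (0:ℝ) 1)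
  f_strictMono_eps : ∀ x ∈ Ioc (0:ℝ) 1, StrictMonoOn (fun ε => f x ε) (Ioc (0:ℝ) 1)
  g_strictMono : StrictMonoOn g (Ioc (0:ℝ) 1)
  f_zero_x : ∀ ε ∈ Icc (0:ℝ) 1, f 0 ε = 0
  f_zero_eps : ∀ x ∈ Icc (0:ℝ) 1, f x 0 = 0
  g_zero : g 0 = 0
  f_contDiff : ContDiffOn ℝ 2 (fun p : ℝ × ℝ => f p.1 p.2) (Icc 0 1 ×ˢ Icc 0 1)
  g_contDiff : ContDiffOn ℝ 2 g (Icc (0:ℝ) 1)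

/-- `G(x) = ∫₀ˣ g(z) dz`. -/
noncomputable def bigG (g : ℝ → ℝ) (x : ℝ) : ℝ := ∫ z in (0:ℝ)..x, g z

/-- `F(x; ε) = ∫₀ˣ f(z; ε) dz`. -/
noncomputable def bigF (f : ℝ → ℝ → ℝ) (x ε : ℝ) : ℝ := ∫ z in (0:ℝ)..x, f z ε

/-- The potential function `U(x; ε) = x g(x) − G(x) − F(g(x); ε)`. -/
noncomputable def potentialU (f : ℝ → ℝ → ℝ) (g : ℝ → ℝ) (x ε : ℝ) : ℝ :=
  x * g x - bigG g x - bigF f (g x) ε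

/-- `u(ε) = sup{ x̃ ∈ [0,1] : f(g(x); ε) < x for all x ∈ (0, x̃) }`. -/
noncomputable def minUnstable (f : ℝ → ℝ → ℝ) (g : ℝ → ℝ) (ε : ℝ) : ℝ :=
  sSup {x' : ℝ | x' ∈ Icc (0:ℝ) 1 ∧ ∀ x ∈ Ioo (0:ℝ) x', f (g x) ε < x}

/-- The potential threshold
`ε* = sup{ ε ∈ [0,1] : u(ε) > 0 and min_{x ∈ [u(ε),1]} U(x; ε) > 0 }`. -/
noncomputable def potentialThreshold (f : ℝ → ℝ → ℝ) (g : ℝ → ℝ) : ℝ :=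
  sSup {ε : ℝ | ε ∈ Icc (0:ℝ) 1 ∧ 0 < minUnstable f g ε ∧
    ∀ x ∈ Icc (minUnstable f g ε) 1, 0 < potentialU f g x ε}

/-!
Differentiating the potential gives `∂U/∂x (x; ε) = (x - f(g(x); ε)) g'(x)`, so where `g' > 0`
a positive derivative of `U` is exactly the statement `f(g(x); ε) < x`. The density-evolution
map `φ = f(g(·); ε)` is then nonnegative, fixes `0` and lies strictly below the identity on
`(0, 1)`: its orbits from `[0, 1)` decrease, and their limit is a fixed point of the continuous
map `φ`, hence `0`.
-/

theorem hasDerivAt_integral_of_continuousOn_Icc {E : Type*} [NormedAddCommGroup E]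
    [NormedSpace ℝ E] [CompleteSpace E] {h : ℝ → E} {a b c : ℝ}
    (hh : ContinuousOn h (Icc a c)) (hb : b ∈ Ioo a c) :
    HasDerivAt (fun y => ∫ t in a..y, h t) (h b) b :=
  integral_hasDerivAt_right
    ((hh.mono (by rw [uIcc_of_le hb.1.le]; exact Icc_subset_Icc_right hb.2.le)).intervalIntegrable)
    ((hh.mono Ioo_subset_Icc_self).stronglyMeasurableAtFilter isOpen_Ioo b hb)
    (hh.continuousAt (Icc_mem_nhds hb.1 hb.2))

section Iteration

variable {φ : ℝ → ℝ} {x : ℕ → ℝ}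

theorem forall_mem_and_antitone_of_le_self {s : Set ℝ} (hmaps : MapsTo φ s s)
    (hle : ∀ y ∈ s, φ y ≤ y) (hx0 : x 0 ∈ s) (hrec : ∀ i, x (i + 1) = φ (x i)) :
    (∀ i, x i ∈ s) ∧ Antitone x := by
  have hxs : ∀ i, x i ∈ s := by
    intro i
    induction i with
    | zero => exact hx0
    | succ i ih => exact hrec i ▸ hmaps ih
  exact ⟨hxs, antitone_nat_of_succ_le fun i => hrec i ▸ hle _ (hxs i)⟩

theorem map_eq_of_tendsto_of_recursion {s : Set ℝ} {L : ℝ} (hcont : ContinuousWithinAt φ s L)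
    (hxs : ∀ i, x i ∈ s) (hrec : ∀ i, x (i + 1) = φ (x i)) (hlim : Tendsto x atTop (𝓝 L)) :
    φ L = L := by
  have hφx : Tendsto (fun i => φ (x i)) atTop (𝓝 (φ L)) :=
    hcont.tendsto.comp (tendsto_nhdsWithin_iff.2 ⟨hlim, Eventually.of_forall hxs⟩)
  refine tendsto_nhds_unique hφx ?_
  simpa only [Function.comp_def, hrec] using hlim.comp (tendsto_add_atTop_nat 1)

theorem antitone_and_tendsto_zero_of_lt_self {b : ℝ} (hφ0 : φ 0 = 0)
    (hnonneg : ∀ y ∈ Ico 0 b, 0 ≤ φ y) (hlt : ∀ y ∈ Ioo 0 b, φ y < y)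
    (hcont : ContinuousOn φ (Ico 0 b)) (hx0 : x 0 ∈ Ico 0 b)
    (hrec : ∀ i, x (i + 1) = φ (x i)) :
    Antitone x ∧ Tendsto x atTop (𝓝 0) := by
  have hle : ∀ y ∈ Ico 0 b, φ y ≤ y := by
    rintro y ⟨hy0, hyb⟩
    rcases hy0.eq_or_lt with rfl | hy0
    · exact hφ0.le
    · exact (hlt y ⟨hy0, hyb⟩).le
  have hmaps : MapsTo φ (Ico 0 b) (Ico 0 b) :=
    fun y hy => ⟨hnonneg y hy, (hle y hy).trans_lt hy.2⟩
  obtain ⟨hxs, hanti⟩ := forall_mem_and_antitone_of_le_self hmaps hle hx0 hrec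
  have hbdd : BddBelow (range x) := ⟨0, forall_mem_range.2 fun i => (hxs i).1⟩
  have hlim := tendsto_atTop_ciInf hanti hbdd
  set L := ⨅ i, x i
  have hL : L ∈ Ico 0 b := ⟨le_ciInf fun i => (hxs i).1, (ciInf_le hbdd 0).trans_lt (hxs 0).2⟩
  have hfix : φ L = L := map_eq_of_tendsto_of_recursion (hcont L hL) hxs hrec hlim
  have hL0 : L = 0 := by
    by_contra hne
    exact (hlt L ⟨lt_of_le_of_ne hL.1 (Ne.symm hne), hL.2⟩).ne hfix
  exact ⟨hanti, hL0 ▸ hlim⟩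

end Iteration

namespace ScalarAdmissible

variable {f : ℝ → ℝ → ℝ} {g : ℝ → ℝ} {ε : ℝ}

theorem g_mem_Ioo (hadm : ScalarAdmissible f g) {x : ℝ} (hx : x ∈ Ioo 0 1) : g x ∈ Ioo 0 1 := by
  have hx' : x ∈ Ioc 0 1 := ⟨hx.1, hx.2.le⟩
  have hhalf : x / 2 ∈ Ioc 0 1 := ⟨half_pos hx.1, by linarith [hx.2]⟩
  constructor
  · calc 0 ≤ g (x / 2) := (hadm.g_mem _ (Ioc_subset_Icc_self hhalf)).1
      _ < g x := hadm.g_strictMono hhalf hx' (half_lt_self hx.1)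
  · calc g x < g 1 := hadm.g_strictMono hx' (right_mem_Ioc.2 zero_lt_one) hx.2
      _ ≤ 1 := (hadm.g_mem 1 (right_mem_Icc.2 zero_le_one)).2

theorem continuousOn_f_left (hadm : ScalarAdmissible f g) (hε : ε ∈ Icc (0:ℝ) 1) :
    ContinuousOn (fun z => f z ε) (Icc 0 1) :=
  hadm.f_contDiff.continuousOn.comp (continuous_id.prodMk continuous_const).continuousOn
    fun _ hz => ⟨hz, hε⟩

theorem continuousOn_f_comp_g (hadm : ScalarAdmissible f g) (hε : ε ∈ Icc (0:ℝ) 1) :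
    ContinuousOn (fun y => f (g y) ε) (Icc 0 1) :=
  (hadm.continuousOn_f_left hε).comp hadm.g_contDiff.continuousOn hadm.g_mem

theorem hasDerivAt_potentialU (hadm : ScalarAdmissible f g) (hε : ε ∈ Icc (0:ℝ) 1) {x : ℝ}
    (hx : x ∈ Ioo 0 1) :
    HasDerivAt (fun y => potentialU f g y ε) ((x - f (g x) ε) * deriv g x) x := by
  have hg : HasDerivAt g (deriv g x) x :=
    ((hadm.g_contDiff.contDiffAt (Icc_mem_nhds hx.1 hx.2)).differentiableAt
      (by norm_num)).hasDerivAt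
  have hG : HasDerivAt (bigG g) (g x) x :=
    hasDerivAt_integral_of_continuousOn_Icc hadm.g_contDiff.continuousOn hx
  have hF : HasDerivAt (fun u => bigF f u ε) (f (g x) ε) (g x) :=
    hasDerivAt_integral_of_continuousOn_Icc (hadm.continuousOn_f_left hε) (hadm.g_mem_Ioo hx)
  exact (((hasDerivAt_id' x).mul hg).sub hG |>.sub (hF.comp x hg)).congr_deriv (by ring)

theorem comp_lt_self_of_deriv_potentialU_pos (hadm : ScalarAdmissible f g)
    (hε : ε ∈ Icc (0:ℝ) 1) {x : ℝ} (hx : x ∈ Ioo 0 1) (hgx : 0 < deriv g x)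
    (hUx : 0 < deriv (fun y => potentialU f g y ε) x) : f (g x) ε < x := by
  rw [(hadm.hasDerivAt_potentialU hε hx).deriv, mul_pos_iff_of_pos_right hgx] at hUx
  linarith

end ScalarAdmissible

/-- If `g′ > 0` on `(0,1)` and `∂U/∂x(x; ε) > 0` for all `x ∈ (0,1)`, then
`f(g(x); ε) < x` for all `x ∈ (0,1)`; consequently, for any initial value
`x⁽⁰⁾ ∈ [0,1)`, the density-evolution sequence `x⁽ⁱ⁾ = f(g(x⁽ⁱ⁻¹⁾); ε)` is
nonincreasing and converges to `0`. -/
theorem de_converges_below_bp (f : ℝ → ℝ → ℝ) (g : ℝ → ℝ)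
    (hadm : ScalarAdmissible f g)
    (hg' : ∀ x ∈ Ioo (0:ℝ) 1, 0 < deriv g x)
    (ε : ℝ) (hε : ε ∈ Icc (0:ℝ) 1)
    (hU : ∀ x ∈ Ioo (0:ℝ) 1, 0 < deriv (fun y => potentialU f g y ε) x) :
    (∀ x ∈ Ioo (0:ℝ) 1, f (g x) ε < x) ∧
      ∀ x₀ ∈ Ico (0:ℝ) 1, ∀ x : ℕ → ℝ, x 0 = x₀ →
        (∀ i : ℕ, x (i + 1) = f (g (x i)) ε) →
        Antitone x ∧ Tendsto x atTop (𝓝 0) := by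
  have hlt : ∀ x ∈ Ioo (0:ℝ) 1, f (g x) ε < x := fun x hx =>
    hadm.comp_lt_self_of_deriv_potentialU_pos hε hx (hg' x hx) (hU x hx)
  refine ⟨hlt, fun x₀ hx₀ x hx0 hrec => ?_⟩
  refine antitone_and_tendsto_zero_of_lt_self ?_ ?_ hlt
    ((hadm.continuousOn_f_comp_g hε).mono Ico_subset_Icc_self) (hx0 ▸ hx₀) hrec
  · rw [hadm.g_zero, hadm.f_zero_x ε hε]
  · exact fun y hy => (hadm.f_mem _ (hadm.g_mem y (Ico_subset_Icc_self hy)) ε hε).1
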